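/- arXiv:2009.13132 — 3 statements merged into one kernel-verified Lean document; each statement's English description precedes it below -/
import Mathlib

section
/- Let ν > 0 and p, q ∈ ℝ, and let u = (u₁,u₂,u₃) : ℝ² → ℝ³ be twice continuously differentiable with compact support, satisfying the projected divergence-free condition ∂₁(u₁ − p·u₃) + ∂₂(u₂ − q·u₃) = 0 on ℝ², and satisfying for each i = 1,2,3 the elliptic equation −ν[ (1+p²)∂₁²uᵢ + (1+q²)∂₂²uᵢ + 2pq ∂₁∂₂uᵢ ] + (u₁ − p·u₃)·∂₁uᵢ + (u₂ − q·u₃)·∂₂uᵢ = 0 everywhere on ℝ². Then u ≡ 0. -/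
/-!
Energy method. Testing the `i`-th equation against `uᵢ` and summing over `i`, the diffusion term
becomes `ν (|∂₁u|² + |∂₂u|² + |p∂₁u + q∂₂u|²)` plus a divergence, because the operator is
`∂₁² + ∂₂² + (p∂₁ + q∂₂)²`. The advection term is `½ b·∇|u|²` with `b = (u₁ - pu₃, u₂ - qu₃)`,
which by `div b = 0` is the divergence of `½ |u|² b`. Divergences of compactly supported `C¹`
fields integrate to zero, so the nonnegative continuous dissipation has integral zero and
vanishes; hence `Du = 0`, and `u`, being constant with compact support, is zero.
-/

open MeasureTheory
open scoped RealInnerProductSpace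

section Integration

variable {E : Type*} [NormedAddCommGroup E] [NormedSpace ℝ E]
  [MeasurableSpace E] [BorelSpace E] (μ : Measure E) [μ.IsAddHaarMeasure]
  {f : E → ℝ}

theorem HasCompactSupport.integrable_fderiv_apply (hf : ContDiff ℝ 1 f)
    (hfs : HasCompactSupport f) (v : E) : Integrable (fun x => fderiv ℝ f x v) μ :=
  ((hf.continuous_fderiv one_ne_zero).clm_apply continuous_const).integrable_of_hasCompactSupport
    (hfs.fderiv_apply ℝ v)

theorem HasCompactSupport.integral_fderiv_apply_eq_zero [FiniteDimensional ℝ E]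
    (hf : ContDiff ℝ 1 f) (hfs : HasCompactSupport f) (v : E) : ∫ x, fderiv ℝ f x v ∂μ = 0 := by
  have h := integral_mul_fderiv_eq_neg_fderiv_mul_of_integrable (μ := μ) (v := v)
    (f := fun _ => (1 : ℝ)) (g := f) (by simp) (by simpa using hfs.integrable_fderiv_apply μ hf v)
    (by simpa using hf.continuous.integrable_of_hasCompactSupport hfs)
    (fun _ _ => differentiableAt_const _) (fun x _ => (hf.differentiable one_ne_zero) x)
  simpa using h

theorem integrable_sum_fderiv_apply {ι : Type*} [Fintype ι] {f : ι → E → ℝ}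
    (hf : ∀ i, ContDiff ℝ 1 (f i)) (hfs : ∀ i, HasCompactSupport (f i)) (v : ι → E) :
    Integrable (fun x => ∑ i, fderiv ℝ (f i) x (v i)) μ :=
  integrable_finsetSum _ fun i _ => (hfs i).integrable_fderiv_apply μ (hf i) (v i)

theorem integral_sum_fderiv_apply_eq_zero [FiniteDimensional ℝ E] {ι : Type*} [Fintype ι]
    {f : ι → E → ℝ} (hf : ∀ i, ContDiff ℝ 1 (f i)) (hfs : ∀ i, HasCompactSupport (f i))
    (v : ι → E) : ∫ x, ∑ i, fderiv ℝ (f i) x (v i) ∂μ = 0 := by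
  rw [integral_finsetSum _ fun i _ => (hfs i).integrable_fderiv_apply μ (hf i) (v i)]
  exact Finset.sum_eq_zero fun i _ => (hfs i).integral_fderiv_apply_eq_zero μ (hf i) (v i)

end Integration

theorem Continuous.eq_zero_of_integral_eq_zero_of_nonneg {X : Type*} [TopologicalSpace X]
    [MeasurableSpace X] [OpensMeasurableSpace X] {μ : Measure X} [μ.IsOpenPosMeasure]
    {g : X → ℝ} (hg : Continuous g) (hgi : Integrable g μ) (hg0 : 0 ≤ g)
    (hI : ∫ x, g x ∂μ = 0) : g = 0 :=
  (hg.ae_eq_iff_eq μ continuous_const).mp ((integral_eq_zero_iff_of_nonneg hg0 hgi).mp hI)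

theorem HasCompactSupport.eq_zero_of_fderiv_eq_zero {E F : Type*} [NormedAddCommGroup E]
    [NormedSpace ℝ E] [Nontrivial E] [NormedAddCommGroup F] [NormedSpace ℝ F] {f : E → F}
    (hfs : HasCompactSupport f) (hf : Differentiable ℝ f) (hf' : ∀ x, fderiv ℝ f x = 0) :
    f = 0 := by
  obtain ⟨z, hz⟩ := (Set.ne_univ_iff_exists_notMem _).mp hfs.isCompact.ne_univ
  funext x
  rw [is_const_of_fderiv_eq_zero hf hf' x z, image_eq_zero_of_notMem_tsupport hz, Pi.zero_apply]

theorem fderiv_fderiv_apply {E F : Type*} [NormedAddCommGroup E] [NormedSpace ℝ E]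
    [NormedAddCommGroup F] [NormedSpace ℝ F] {u : E → F} {x : E}
    (hu : DifferentiableAt ℝ (fderiv ℝ u) x) (v w : E) :
    fderiv ℝ (fun y => fderiv ℝ u y w) x v = fderiv ℝ (fderiv ℝ u) x v w := by
  rw [fderiv_clm_apply hu (differentiableAt_const w)]
  simp

section Calculus

variable {E F : Type*} [NormedAddCommGroup E] [NormedSpace ℝ E]
  [NormedAddCommGroup F] [InnerProductSpace ℝ F] {u : E → F} {x : E}

theorem fderiv_inner_fderiv_apply (hu : ContDiff ℝ 2 u) (x v w : E) :
    fderiv ℝ (fun y => ⟪u y, fderiv ℝ u y w⟫) x v =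
      ⟪fderiv ℝ u x v, fderiv ℝ u x w⟫ + ⟪u x, fderiv ℝ (fderiv ℝ u) x v w⟫ := by
  have hdu : Differentiable ℝ (fderiv ℝ u) :=
    (hu.fderiv_right (m := 1) le_rfl).differentiable one_ne_zero
  rw [((hu.differentiable two_ne_zero x).hasFDerivAt.inner ℝ
    ((hdu x).hasFDerivAt.clm_apply (hasFDerivAt_const w x))).fderiv]
  simp only [ContinuousLinearMap.comp_zero, zero_add, ContinuousLinearMap.comp_apply,
    ContinuousLinearMap.prod_apply, ContinuousLinearMap.flip_apply, fderivInnerCLM_apply]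
  ring

theorem fderiv_norm_sq_mul_apply (hu : DifferentiableAt ℝ u x) (ℓ : F →L[ℝ] ℝ) (v : E) :
    fderiv ℝ (fun y => ‖u y‖ ^ 2 * ℓ (u y)) x v =
      2 * ⟪u x, fderiv ℝ u x v⟫ * ℓ (u x) + ‖u x‖ ^ 2 * ℓ (fderiv ℝ u x v) := by
  have h : HasFDerivAt (fun y => ‖u y‖ ^ 2 * ℓ (u y)) _ x :=
    hu.hasFDerivAt.norm_sq.mul (ℓ.hasFDerivAt.comp x hu.hasFDerivAt)
  rw [h.fderiv]
  simp only [add_apply, smul_apply, ContinuousLinearMap.comp_apply, smul_eq_mul,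
    coe_innerSL_apply, nsmul_eq_mul, Nat.cast_ofNat]
  ring

end Calculus

section Energy

variable {E F ι κ : Type*} [NormedAddCommGroup E] [NormedSpace ℝ E]
  [NormedAddCommGroup F] [InnerProductSpace ℝ F] [Fintype ι] [Fintype κ]
  {ν : ℝ} {v : κ → E} {c : ι → E} {ℓ : ι → F →L[ℝ] ℝ} {u : E → F}

theorem two_mul_sum_norm_fderiv_sq_eq (hu : ContDiff ℝ 2 u) (x : E)
    (hdiv : ∑ j, ℓ j (fderiv ℝ u x (c j)) = 0)
    (hpde : ν • ∑ k, fderiv ℝ (fderiv ℝ u) x (v k) (v k) =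
      ∑ j, ℓ j (u x) • fderiv ℝ u x (c j)) :
    2 * ν * ∑ k, ‖fderiv ℝ u x (v k)‖ ^ 2 =
      2 * ν * ∑ k, fderiv ℝ (fun y => ⟪u y, fderiv ℝ u y (v k)⟫) x (v k) -
        ∑ j, fderiv ℝ (fun y => ‖u y‖ ^ 2 * ℓ j (u y)) x (c j) := by
  have hdiffusion : ∑ k, fderiv ℝ (fun y => ⟪u y, fderiv ℝ u y (v k)⟫) x (v k) =
      ∑ k, ‖fderiv ℝ u x (v k)‖ ^ 2 + ⟪u x, ∑ k, fderiv ℝ (fderiv ℝ u) x (v k) (v k)⟫ := by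
    simp only [fderiv_inner_fderiv_apply hu, Finset.sum_add_distrib, inner_sum,
      real_inner_self_eq_norm_sq]
  have hadvection : ∑ j, fderiv ℝ (fun y => ‖u y‖ ^ 2 * ℓ j (u y)) x (c j) =
      2 * ⟪u x, ∑ j, ℓ j (u x) • fderiv ℝ u x (c j)⟫ := by
    simp only [fderiv_norm_sq_mul_apply (hu.differentiable two_ne_zero x),
      Finset.sum_add_distrib, ← Finset.mul_sum, hdiv, mul_zero, add_zero]
    rw [inner_sum, Finset.mul_sum]
    exact Finset.sum_congr rfl fun j _ => by rw [real_inner_smul_right]; ring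
  rw [hdiffusion, hadvection, ← hpde, real_inner_smul_right]
  ring

theorem integral_two_mul_sum_norm_fderiv_sq_eq_zero [FiniteDimensional ℝ E] [MeasurableSpace E]
    [BorelSpace E] (μ : Measure E) [μ.IsAddHaarMeasure] (hu : ContDiff ℝ 2 u)
    (hs : HasCompactSupport u) (hdiv : ∀ x, ∑ j, ℓ j (fderiv ℝ u x (c j)) = 0)
    (hpde : ∀ x, ν • ∑ k, fderiv ℝ (fderiv ℝ u) x (v k) (v k) =
      ∑ j, ℓ j (u x) • fderiv ℝ u x (c j)) :
    ∫ x, 2 * ν * ∑ k, ‖fderiv ℝ u x (v k)‖ ^ 2 ∂μ = 0 := by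
  have hu₁ : ContDiff ℝ 1 u := hu.of_le one_le_two
  have hdu : ContDiff ℝ 1 (fderiv ℝ u) := hu.fderiv_right le_rfl
  have hdiffFlux : ∀ k, ContDiff ℝ 1 fun y => ⟪u y, fderiv ℝ u y (v k)⟫ :=
    fun k => hu₁.inner ℝ (hdu.clm_apply contDiff_const)
  have hdiffFlux_supp : ∀ k, HasCompactSupport fun y => ⟪u y, fderiv ℝ u y (v k)⟫ := fun k =>
    hs.mono fun y hy huy => hy (by simp [huy])
  have hadvFlux : ∀ j, ContDiff ℝ 1 fun y => ‖u y‖ ^ 2 * ℓ j (u y) :=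
    fun j => (hu₁.norm_sq ℝ).mul ((ℓ j).contDiff.comp hu₁)
  have hadvFlux_supp : ∀ j, HasCompactSupport fun y => ‖u y‖ ^ 2 * ℓ j (u y) := fun j =>
    hs.mono fun y hy huy => hy (by simp [huy])
  simp only [two_mul_sum_norm_fderiv_sq_eq hu _ (hdiv _) (hpde _)]
  rw [integral_sub ((integrable_sum_fderiv_apply μ hdiffFlux hdiffFlux_supp v).const_mul _)
      (integrable_sum_fderiv_apply μ hadvFlux hadvFlux_supp c), integral_const_mul,
    integral_sum_fderiv_apply_eq_zero μ hdiffFlux hdiffFlux_supp,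
    integral_sum_fderiv_apply_eq_zero μ hadvFlux hadvFlux_supp, mul_zero, sub_zero]

theorem HasCompactSupport.eq_zero_of_advection_diffusion [FiniteDimensional ℝ E] [Nontrivial E]
    (hν : 0 < ν) (hv : Submodule.span ℝ (Set.range v) = ⊤) (hu : ContDiff ℝ 2 u)
    (hs : HasCompactSupport u) (hdiv : ∀ x, ∑ j, ℓ j (fderiv ℝ u x (c j)) = 0)
    (hpde : ∀ x, ν • ∑ k, fderiv ℝ (fderiv ℝ u) x (v k) (v k) =
      ∑ j, ℓ j (u x) • fderiv ℝ u x (c j)) :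
    u = 0 := by
  borelize E
  set G : E → ℝ := fun x => 2 * ν * ∑ k, ‖fderiv ℝ u x (v k)‖ ^ 2 with hG
  have hGc : Continuous G := by
    have := (hu.fderiv_right (m := 1) le_rfl).continuous
    fun_prop
  have hGs : HasCompactSupport G :=
    (hs.fderiv ℝ).mono fun x hx hdx => hx (by simp [hG, hdx])
  have hG0 : G = 0 := hGc.eq_zero_of_integral_eq_zero_of_nonneg
    (hGc.integrable_of_hasCompactSupport hGs) (fun x => by positivity)
    (integral_two_mul_sum_norm_fderiv_sq_eq_zero Measure.addHaar hu hs hdiv hpde)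
  have hDu : ∀ x, fderiv ℝ u x = 0 := by
    intro x
    have hsum : ∑ k, ‖fderiv ℝ u x (v k)‖ ^ 2 = 0 :=
      (mul_eq_zero.mp (congrFun hG0 x)).resolve_left (by positivity)
    rw [Finset.sum_eq_zero_iff_of_nonneg fun k _ => by positivity] at hsum
    refine ContinuousLinearMap.coe_injective (LinearMap.ext_on_range hv fun k => ?_)
    simpa using hsum k (Finset.mem_univ k)
  exact hs.eq_zero_of_fderiv_eq_zero (hu.differentiable two_ne_zero) hDu

end Energy

theorem EuclideanSpace.span_range_single_single_eq_top (w : EuclideanSpace ℝ (Fin 2)) :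
    Submodule.span ℝ (Set.range
      ![EuclideanSpace.single 0 1, EuclideanSpace.single 1 1, w]) = ⊤ := by
  refine eq_top_iff.2 ((EuclideanSpace.basisFun (Fin 2) ℝ).toBasis.span_eq.ge.trans
    (Submodule.span_mono ?_))
  rintro _ ⟨i, rfl⟩
  fin_cases i
  exacts [⟨0, by simp⟩, ⟨1, by simp⟩]

/-- Proposition 4.1: the homogeneous Dirichlet problem for the elliptic part of
the projected Navier–Stokes system has only the trivial solution: if `u : ℝ² → ℝ³`
is `C²` with compact support, satisfies the projected divergence-free condition,
and solves `-ν[(1+p²)∂₁²uᵢ + (1+q²)∂₂²uᵢ + 2pq∂₁∂₂uᵢ]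
+ (u₁ - p·u₃)∂₁uᵢ + (u₂ - q·u₃)∂₂uᵢ = 0` for each `i`, then `u ≡ 0`. -/
theorem stmt_8 (ν p q : ℝ) (hν : 0 < ν)
    (u : EuclideanSpace ℝ (Fin 2) → EuclideanSpace ℝ (Fin 3))
    (hu : ContDiff ℝ 2 u) (hsupp : HasCompactSupport u)
    (hdiv : ∀ x : EuclideanSpace ℝ (Fin 2),
      (fderiv ℝ u x (EuclideanSpace.single 0 1) 0 -
          p * fderiv ℝ u x (EuclideanSpace.single 0 1) 2) +
        (fderiv ℝ u x (EuclideanSpace.single 1 1) 1 -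
          q * fderiv ℝ u x (EuclideanSpace.single 1 1) 2) = 0)
    (hpde : ∀ x : EuclideanSpace ℝ (Fin 2), ∀ i : Fin 3,
      -ν * ((1 + p ^ 2) *
            fderiv ℝ (fun y => fderiv ℝ u y (EuclideanSpace.single 0 1)) x
              (EuclideanSpace.single 0 1) i +
          (1 + q ^ 2) *
            fderiv ℝ (fun y => fderiv ℝ u y (EuclideanSpace.single 1 1)) x
              (EuclideanSpace.single 1 1) i +
          2 * p * q *
            fderiv ℝ (fun y => fderiv ℝ u y (EuclideanSpace.single 1 1)) x
              (EuclideanSpace.single 0 1) i) +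
        (u x 0 - p * u x 2) * fderiv ℝ u x (EuclideanSpace.single 0 1) i +
        (u x 1 - q * u x 2) * fderiv ℝ u x (EuclideanSpace.single 1 1) i = 0) :
    u = 0 := by
  set e₀ : EuclideanSpace ℝ (Fin 2) := EuclideanSpace.single 0 1
  set e₁ : EuclideanSpace ℝ (Fin 2) := EuclideanSpace.single 1 1
  have hdu : Differentiable ℝ (fderiv ℝ u) :=
    (hu.fderiv_right (m := 1) le_rfl).differentiable one_ne_zero
  refine hsupp.eq_zero_of_advection_diffusion (v := ![e₀, e₁, p • e₀ + q • e₁])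
    (c := ![e₀, e₁]) (ℓ := ![EuclideanSpace.proj 0 - p • EuclideanSpace.proj 2,
      EuclideanSpace.proj 1 - q • EuclideanSpace.proj 2])
    hν (EuclideanSpace.span_range_single_single_eq_top _) hu (fun x => ?_) (fun x => ?_)
  · simpa [Fin.sum_univ_two] using hdiv x
  · ext i
    have hsymm := hu.contDiffAt.isSymmSndFDerivAt (x := x) (by simp) e₀ e₁
    have h := hpde x i
    simp only [fderiv_fderiv_apply (hdu x), hsymm] at h
    simp only [Fin.sum_univ_two, Fin.sum_univ_three, Fin.isValue, Matrix.cons_val_zero,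
      Matrix.cons_val_one, Matrix.cons_val, map_add, map_smul, add_apply, smul_apply, hsymm,
      smul_add, PiLp.add_apply, PiLp.smul_apply, smul_eq_mul, sub_apply, PiLp.proj_apply]
    linear_combination -h
end

section
/- There exists a constant C > 0 such that for every continuously differentiable compactly supported function v : ℝ² → ℝ, ‖v‖_{L⁴(ℝ²)} ≤ C · ‖v‖_{L²(ℝ²)}^{1/2} · ‖∇v‖_{L²(ℝ²)}^{1/2}, equivalently ∫_{ℝ²} v⁴ dx ≤ C⁴ (∫_{ℝ²} v² dx) (∫_{ℝ²} |∇v|² dx). -/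
/-!
Apply the `L¹` Gagliardo–Nirenberg–Sobolev inequality `‖u‖_{L²} ≤ C ‖Du‖_{L¹}`, valid in
dimension two, to `u = v²`. Since `D(v²) = 2 v Dv`, Cauchy–Schwarz bounds `‖D(v²)‖_{L¹}` by
`2 ‖v‖_{L²} ‖Dv‖_{L²}`, while `‖v²‖_{L²} = ‖v‖_{L⁴}²`.
-/

open Module MeasureTheory ENNReal NNReal

section

variable {α : Type*} [MeasurableSpace α] {μ : Measure α}

theorem eLpNorm_two_fun_sq_eq_sq_eLpNorm_four (v : α → ℝ) :
    eLpNorm (fun x => v x ^ 2) 2 μ = eLpNorm v 4 μ ^ 2 := by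
  simpa [show (2 : ℝ≥0∞) * 2 = 4 by norm_num] using eLpNorm_norm_rpow (μ := μ) (p := 2) v two_pos

theorem lpNorm_two_eq_sqrt_integral_norm_sq {F : Type*} [NormedAddCommGroup F] {f : α → F}
    (hf : AEStronglyMeasurable f μ) :
    lpNorm f 2 μ = √(∫ x, ‖f x‖ ^ 2 ∂μ) := by
  rw [lpNorm_eq_integral_norm_rpow_toReal two_ne_zero ofNat_ne_top hf, Real.sqrt_eq_rpow]
  norm_num

theorem lpNorm_four_eq_integral_pow {f : α → ℝ} (hf : AEStronglyMeasurable f μ) :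
    lpNorm f 4 μ = (∫ x, f x ^ 4 ∂μ) ^ ((1 : ℝ) / 4) := by
  rw [lpNorm_eq_integral_norm_rpow_toReal (by norm_num) ofNat_ne_top hf]
  norm_num [Even.pow_abs]

end

section

variable {E : Type*} [NormedAddCommGroup E] [NormedSpace ℝ E]

theorem fderiv_fun_sq {v : E → ℝ} (hv : Differentiable ℝ v) :
    fderiv ℝ (fun x => v x ^ 2) = fun x => (2 * v x) • fderiv ℝ v x := by
  ext1 x
  rw [fderiv_fun_pow 2 (hv x)]
  simp

variable [FiniteDimensional ℝ E] [MeasurableSpace E] [BorelSpace E] (μ : Measure E)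

theorem eLpNorm_one_fderiv_sq_le {v : E → ℝ} (hv : ContDiff ℝ 1 v) :
    eLpNorm (fderiv ℝ (fun x => v x ^ 2)) 1 μ ≤
      2 * eLpNorm v 2 μ * eLpNorm (fderiv ℝ v) 2 μ := by
  have : HolderTriple (2 : ℝ≥0∞) 2 1 := ⟨by simpa using ENNReal.inv_two_add_inv_two⟩
  rw [fderiv_fun_sq (hv.differentiable one_ne_zero)]
  exact_mod_cast eLpNorm_le_eLpNorm_mul_eLpNorm'_of_norm hv.continuous.aestronglyMeasurable
    (hv.continuous_fderiv one_ne_zero).aestronglyMeasurable (fun a L => (2 * a) • L) 2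
    (.of_forall fun x => by simp [norm_smul, mul_assoc])

variable [μ.IsAddHaarMeasure]

theorem sq_eLpNorm_four_le_of_finrank_eq_two (hE : finrank ℝ E = 2)
    {v : E → ℝ} (hv : ContDiff ℝ 1 v) (h2v : HasCompactSupport v) :
    eLpNorm v 4 μ ^ 2 ≤
      2 * eLpNormLESNormFDerivOneConst μ 2 * eLpNorm v 2 μ * eLpNorm (fderiv ℝ v) 2 μ := by
  have hp : NNReal.HolderConjugate (finrank ℝ E) 2 := by
    rw [hE]
    exact NNReal.HolderConjugate.two_two
  calc eLpNorm v 4 μ ^ 2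
      = eLpNorm (fun x => v x ^ 2) (2 : ℝ≥0) μ := (eLpNorm_two_fun_sq_eq_sq_eLpNorm_four v).symm
    _ ≤ eLpNormLESNormFDerivOneConst μ 2 * eLpNorm (fderiv ℝ (fun x => v x ^ 2)) 1 μ :=
      eLpNorm_le_eLpNorm_fderiv_one μ (hv.pow 2)
        (h2v.comp_left (g := (· ^ 2)) (zero_pow two_ne_zero)) hp
    _ ≤ eLpNormLESNormFDerivOneConst μ 2 * (2 * eLpNorm v 2 μ * eLpNorm (fderiv ℝ v) 2 μ) := by
      gcongr
      exact eLpNorm_one_fderiv_sq_le μ hv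
    _ = _ := by ring

theorem sq_lpNorm_four_le_of_finrank_eq_two (hE : finrank ℝ E = 2)
    {v : E → ℝ} (hv : ContDiff ℝ 1 v) (h2v : HasCompactSupport v) :
    lpNorm v 4 μ ^ 2 ≤
      2 * eLpNormLESNormFDerivOneConst μ 2 * lpNorm v 2 μ * lpNorm (fderiv ℝ v) 2 μ := by
  have hdv := hv.continuous_fderiv one_ne_zero
  have hv_fin : eLpNorm v 2 μ ≠ ∞ :=
    (hv.continuous.memLp_of_hasCompactSupport h2v).eLpNorm_ne_top
  have hdv_fin : eLpNorm (fderiv ℝ v) 2 μ ≠ ∞ :=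
    (hdv.memLp_of_hasCompactSupport (h2v.fderiv ℝ)).eLpNorm_ne_top
  have h := ENNReal.toReal_mono (by finiteness) (sq_eLpNorm_four_le_of_finrank_eq_two μ hE hv h2v)
  simpa [toReal_eLpNorm, hv.continuous.aestronglyMeasurable, hdv.aestronglyMeasurable] using h

end

/-- The two-dimensional Ladyzhenskaya (Gagliardo–Nirenberg) inequality: there is
a constant `C > 0` such that `‖v‖_{L⁴(ℝ²)} ≤ C‖v‖_{L²}^{1/2}‖∇v‖_{L²}^{1/2}` for
every `C¹` compactly supported `v : ℝ² → ℝ`. -/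
theorem stmt_10 :
    ∃ C : ℝ, 0 < C ∧
      ∀ v : EuclideanSpace ℝ (Fin 2) → ℝ,
        ContDiff ℝ 1 v → HasCompactSupport v →
        (∫ x : EuclideanSpace ℝ (Fin 2), (v x) ^ 4) ^ ((1 : ℝ) / 4) ≤
          C * (Real.sqrt (∫ x : EuclideanSpace ℝ (Fin 2), (v x) ^ 2)) ^ ((1 : ℝ) / 2) *
            (Real.sqrt (∫ x : EuclideanSpace ℝ (Fin 2), ‖fderiv ℝ v x‖ ^ 2)) ^ ((1 : ℝ) / 2) := by
  -- `+ 1`: the Sobolev constant is not known to be positive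
  refine ⟨√(2 * eLpNormLESNormFDerivOneConst (volume : Measure (EuclideanSpace ℝ (Fin 2))) 2 + 1),
    by positivity, fun v hv h2v => ?_⟩
  have hv_meas := hv.continuous.aestronglyMeasurable (μ := volume)
  have hdv_meas := (hv.continuous_fderiv one_ne_zero).aestronglyMeasurable (μ := volume)
  have hb : 0 ≤ lpNorm v 2 volume := lpNorm_nonneg
  have hd : 0 ≤ lpNorm (fderiv ℝ v) 2 volume := lpNorm_nonneg
  have hv_sq : ∫ x, v x ^ 2 = ∫ x, ‖v x‖ ^ 2 := by simp
  rw [← lpNorm_four_eq_integral_pow hv_meas, hv_sq, ← lpNorm_two_eq_sqrt_integral_norm_sq hv_meas,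
    ← lpNorm_two_eq_sqrt_integral_norm_sq hdv_meas, ← Real.sqrt_eq_rpow, ← Real.sqrt_eq_rpow,
    ← Real.sqrt_mul (by positivity), ← Real.sqrt_mul (by positivity)]
  refine Real.le_sqrt_of_sq_le
    ((sq_lpNorm_four_le_of_finrank_eq_two volume finrank_euclideanSpace_fin hv h2v).trans ?_)
  gcongr
  linarith
end

section
/- Let p, q ∈ ℝ and let u, v : ℝ² → ℝ³ be continuously differentiable compactly supported maps, each satisfying the projected divergence-free condition (∂₁(u₁ − p·u₃) + ∂₂(u₂ − q·u₃) = 0 and ∂₁(v₁ − p·v₃) + ∂₂(v₂ − q·v₃) = 0 on ℝ²), and set w = u − v. Then ∫_{ℝ²} Σ_{i=1}^{3} [ (u₁ − p·u₃)·∂₁uᵢ − (v₁ − p·v₃)·∂₁vᵢ + (u₂ − q·u₃)·∂₂uᵢ − (v₂ − q·v₃)·∂₂vᵢ ]·wᵢ dx = ∫_{ℝ²} Σ_{i=1}^{3} [ (w₁ − p·w₃)·∂₁uᵢ + (w₂ − q·w₃)·∂₂uᵢ ]·wᵢ dx. -/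
/-!
In projected coordinates the nonlinear terms split as `(u · ∇) u - (v · ∇) v = (w · ∇) u + (v · ∇) w`,
where `v · ∇ = (v₁ - p v₃) ∂₁ + (v₂ - q v₃) ∂₂`. Tested against `w`, the second term is
`½ ∫ (v · ∇) |w|² = -½ ∫ div(v₁ - p v₃, v₂ - q v₃) |w|²`, which vanishes because `v` is projected
divergence-free.
-/

open MeasureTheory

theorem Continuous.integrable_mul_of_hasCompactSupport_left {X : Type*} [TopologicalSpace X]
    [MeasurableSpace X] [OpensMeasurableSpace X] {μ : Measure X} [IsFiniteMeasureOnCompacts μ]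
    {a b : X → ℝ} (ha : Continuous a) (has : HasCompactSupport a) (hb : Continuous b) :
    Integrable (fun x => a x * b x) μ :=
  (ha.mul hb).integrable_of_hasCompactSupport has.mul_right

theorem integral_add_eq_left_of_integral_eq_zero {X F : Type*} [MeasurableSpace X]
    {μ : Measure X} [NormedAddCommGroup F] [NormedSpace ℝ F] {f g : X → F}
    (hg : Integrable g μ) (hg0 : ∫ x, g x ∂μ = 0) :
    ∫ x, f x + g x ∂μ = ∫ x, f x ∂μ := by
  by_cases hf : Integrable f μ
  · rw [integral_add hf hg, hg0, add_zero]
  · rw [integral_undef hf, integral_undef ((integrable_add_iff_integrable_left' hg).not.mpr hf)]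

theorem fderiv_clm_comp_apply {𝕜 E F G : Type*} [NontriviallyNormedField 𝕜]
    [NormedAddCommGroup E] [NormedSpace 𝕜 E] [NormedAddCommGroup F] [NormedSpace 𝕜 F]
    [NormedAddCommGroup G] [NormedSpace 𝕜 G] (L : F →L[𝕜] G) {g : E → F} {x : E}
    (hg : DifferentiableAt 𝕜 g x) (v : E) :
    fderiv 𝕜 (fun y => L (g y)) x v = L (fderiv 𝕜 g x v) := by
  rw [← Function.comp_def, fderiv_comp x L.differentiableAt hg, L.fderiv]
  rfl

section Advection

variable {E : Type*} [NormedAddCommGroup E] [NormedSpace ℝ E] {ι : Type*} [Fintype ι]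

/-- `(A · ∇) f` for the vector field `Σⱼ Aⱼ eⱼ`. -/
noncomputable def advection (A : ι → E → ℝ) (e : ι → E) (f : E → ℝ) (x : E) : ℝ :=
  ∑ j, A j x * fderiv ℝ f x (e j)

variable {A : ι → E → ℝ} {e : ι → E} {f : E → ℝ}

theorem continuous_advection (hA : ∀ j, Continuous (A j)) (hf : ContDiff ℝ 1 f) :
    Continuous (advection A e f) :=
  continuous_finsetSum _ fun j _ =>
    (hA j).mul ((hf.continuous_fderiv one_ne_zero).clm_apply continuous_const)

theorem hasCompactSupport_advection (hA : ∀ j, HasCompactSupport (A j)) :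
    HasCompactSupport (advection A e f) :=
  HasCompactSupport.intro (isCompact_iUnion hA) fun x hx => Finset.sum_eq_zero fun j _ => by
    rw [image_eq_zero_of_notMem_tsupport fun h => hx (Set.mem_iUnion_of_mem j h), zero_mul]

theorem advection_mul_self (hf : Differentiable ℝ f) (x : E) :
    advection A e (fun y => f y * f y) x = 2 * (advection A e f x * f x) := by
  simp only [advection, fderiv_fun_mul (hf x) (hf x), Finset.sum_mul, Finset.mul_sum]
  refine Finset.sum_congr rfl fun j _ => ?_
  simp only [add_apply, smul_apply, smul_eq_mul]
  ring

variable [MeasurableSpace E] {μ : Measure E}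

theorem integrable_advection_mul [OpensMeasurableSpace E] [IsFiniteMeasureOnCompacts μ]
    (hA : ∀ j, Continuous (A j)) (hAs : ∀ j, HasCompactSupport (A j)) (hf : ContDiff ℝ 1 f)
    {g : E → ℝ} (hg : Continuous g) :
    Integrable (fun x => advection A e f x * g x) μ :=
  (continuous_advection hA hf).integrable_mul_of_hasCompactSupport_left
    (hasCompactSupport_advection hAs) hg

variable [BorelSpace E] [FiniteDimensional ℝ E] [μ.IsAddHaarMeasure]

theorem integral_mul_fderiv_eq_neg_fderiv_mul_of_hasCompactSupport {a g : E → ℝ}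
    (ha : ContDiff ℝ 1 a) (has : HasCompactSupport a) (hg : ContDiff ℝ 1 g) (v : E) :
    ∫ x, a x * fderiv ℝ g x v ∂μ = -∫ x, fderiv ℝ a x v * g x ∂μ := by
  have hda' := (ha.continuous_fderiv one_ne_zero).clm_apply (continuous_const (y := v))
  have hdg' := (hg.continuous_fderiv one_ne_zero).clm_apply (continuous_const (y := v))
  exact integral_mul_fderiv_eq_neg_fderiv_mul_of_integrable
    (hda'.integrable_mul_of_hasCompactSupport_left (has.fderiv_apply (𝕜 := ℝ) v) hg.continuous)
    (ha.continuous.integrable_mul_of_hasCompactSupport_left has hdg')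
    (ha.continuous.integrable_mul_of_hasCompactSupport_left has hg.continuous)
    (fun x _ => ha.differentiable one_ne_zero x) (fun x _ => hg.differentiable one_ne_zero x)

theorem integral_advection_eq_neg_integral_div_mul (hA : ∀ j, ContDiff ℝ 1 (A j))
    (hAs : ∀ j, HasCompactSupport (A j)) (hf : ContDiff ℝ 1 f) :
    ∫ x, advection A e f x ∂μ = -∫ x, (∑ j, fderiv ℝ (A j) x (e j)) * f x ∂μ := by
  have hf' j := (hf.continuous_fderiv one_ne_zero).clm_apply (continuous_const (y := e j))
  have hA' j := ((hA j).continuous_fderiv one_ne_zero).clm_apply (continuous_const (y := e j))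
  simp only [advection, Finset.sum_mul]
  rw [integral_finsetSum _ fun j _ =>
      (hA j).continuous.integrable_mul_of_hasCompactSupport_left (hAs j) (hf' j),
    integral_finsetSum _ fun j _ =>
      (hA' j).integrable_mul_of_hasCompactSupport_left ((hAs j).fderiv_apply (𝕜 := ℝ) _)
        hf.continuous,
    ← Finset.sum_neg_distrib]
  exact Finset.sum_congr rfl fun j _ =>
    integral_mul_fderiv_eq_neg_fderiv_mul_of_hasCompactSupport (hA j) (hAs j) hf (e j)

theorem integral_advection_mul_self_eq_zero (hA : ∀ j, ContDiff ℝ 1 (A j))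
    (hAs : ∀ j, HasCompactSupport (A j)) (hf : ContDiff ℝ 1 f)
    (hdiv : ∀ x, ∑ j, fderiv ℝ (A j) x (e j) = 0) :
    ∫ x, advection A e f x * f x ∂μ = 0 := by
  have hsq : ∫ x, advection A e (fun y => f y * f y) x ∂μ = 0 := by
    simp [integral_advection_eq_neg_integral_div_mul hA hAs (hf.mul hf), hdiv]
  simp only [advection_mul_self (hf.differentiable one_ne_zero), integral_const_mul] at hsq
  simpa using hsq

theorem integral_sum_advection_mul_self_eq_zero {κ : Type*} [Fintype κ] {w : κ → E → ℝ}
    (hA : ∀ j, ContDiff ℝ 1 (A j)) (hAs : ∀ j, HasCompactSupport (A j))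
    (hw : ∀ i, ContDiff ℝ 1 (w i)) (hdiv : ∀ x, ∑ j, fderiv ℝ (A j) x (e j) = 0) :
    ∫ x, ∑ i, advection A e (w i) x * w i x ∂μ = 0 := by
  rw [integral_finsetSum _ fun i _ =>
    integrable_advection_mul (fun j => (hA j).continuous) hAs (hw i) (hw i).continuous]
  exact Finset.sum_eq_zero fun i _ => integral_advection_mul_self_eq_zero hA hAs (hw i) hdiv

end Advection

theorem stmt_15_general (p q : ℝ)
    (u v : EuclideanSpace ℝ (Fin 2) → EuclideanSpace ℝ (Fin 3))
    (hu : ContDiff ℝ 1 u)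
    (hv : ContDiff ℝ 1 v) (hvsupp : HasCompactSupport v)
    (hdivv : ∀ x : EuclideanSpace ℝ (Fin 2),
      (fderiv ℝ v x (EuclideanSpace.single 0 1) 0 -
          p * fderiv ℝ v x (EuclideanSpace.single 0 1) 2) +
        (fderiv ℝ v x (EuclideanSpace.single 1 1) 1 -
          q * fderiv ℝ v x (EuclideanSpace.single 1 1) 2) = 0) :
    (∫ x : EuclideanSpace ℝ (Fin 2), ∑ i : Fin 3,
        ((u x 0 - p * u x 2) * fderiv ℝ u x (EuclideanSpace.single 0 1) i -
          (v x 0 - p * v x 2) * fderiv ℝ v x (EuclideanSpace.single 0 1) i +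
          (u x 1 - q * u x 2) * fderiv ℝ u x (EuclideanSpace.single 1 1) i -
          (v x 1 - q * v x 2) * fderiv ℝ v x (EuclideanSpace.single 1 1) i) *
          (u x i - v x i)) =
      ∫ x : EuclideanSpace ℝ (Fin 2), ∑ i : Fin 3,
        (((u x 0 - v x 0) - p * (u x 2 - v x 2)) *
            fderiv ℝ u x (EuclideanSpace.single 0 1) i +
          ((u x 1 - v x 1) - q * (u x 2 - v x 2)) *
            fderiv ℝ u x (EuclideanSpace.single 1 1) i) *
          (u x i - v x i) := by
  have hdu := hu.differentiable one_ne_zero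
  have hdv := hv.differentiable one_ne_zero
  set e : Fin 2 → EuclideanSpace ℝ (Fin 2) :=
    ![EuclideanSpace.single 0 1, EuclideanSpace.single 1 1]
  set L : Fin 2 → EuclideanSpace ℝ (Fin 3) →L[ℝ] ℝ :=
    ![EuclideanSpace.proj 0 - p • EuclideanSpace.proj 2,
      EuclideanSpace.proj 1 - q • EuclideanSpace.proj 2]
  set A : Fin 2 → EuclideanSpace ℝ (Fin 2) → ℝ := fun j x => L j (v x)
  set w : Fin 3 → EuclideanSpace ℝ (Fin 2) → ℝ := fun i x => EuclideanSpace.proj i (u x - v x)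
  have hA j : ContDiff ℝ 1 (A j) := (L j).contDiff.comp hv
  have hAs j : HasCompactSupport (A j) := hvsupp.comp_left (map_zero (L j))
  have hw i : ContDiff ℝ 1 (w i) := (EuclideanSpace.proj (𝕜 := ℝ) i).contDiff.comp (hu.sub hv)
  have hdivA x : ∑ j, fderiv ℝ (A j) x (e j) = 0 := by
    simpa [A, L, e, fderiv_clm_comp_apply _ (hdv x)] using hdivv x
  have hw' i x y : fderiv ℝ (w i) x y = fderiv ℝ u x y i - fderiv ℝ v x y i := by
    simp only [w]
    rw [fderiv_clm_comp_apply _ (g := fun y => u y - v y) ((hdu x).sub (hdv x)),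
      fderiv_fun_sub (hdu x) (hdv x)]
    rfl
  conv_rhs => rw [← integral_add_eq_left_of_integral_eq_zero
    (integrable_finsetSum _ fun i _ =>
      integrable_advection_mul (fun j => (hA j).continuous) hAs (hw i) (hw i).continuous)
    (integral_sum_advection_mul_self_eq_zero hA hAs hw hdivA)]
  congr 1
  funext x
  rw [← Finset.sum_add_distrib]
  refine Finset.sum_congr rfl fun i _ => ?_
  simp only [advection, hw', Fin.sum_univ_two]
  simp [A, L, e, w]
  ring

/-- Cancellation identity in the uniqueness proof for the projected problem:
for two `C¹` compactly supported projected divergence-free maps `u, v : ℝ² → ℝ³`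
and `w = u - v`, the difference of the two nonlinear terms tested against `w`
reduces to `∫ Σᵢ [(w₁-p·w₃)∂₁uᵢ + (w₂-q·w₃)∂₂uᵢ]·wᵢ dx`. -/
theorem stmt_15 (p q : ℝ)
    (u v : EuclideanSpace ℝ (Fin 2) → EuclideanSpace ℝ (Fin 3))
    (hu : ContDiff ℝ 1 u) (husupp : HasCompactSupport u)
    (hv : ContDiff ℝ 1 v) (hvsupp : HasCompactSupport v)
    (hdivu : ∀ x : EuclideanSpace ℝ (Fin 2),
      (fderiv ℝ u x (EuclideanSpace.single 0 1) 0 -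
          p * fderiv ℝ u x (EuclideanSpace.single 0 1) 2) +
        (fderiv ℝ u x (EuclideanSpace.single 1 1) 1 -
          q * fderiv ℝ u x (EuclideanSpace.single 1 1) 2) = 0)
    (hdivv : ∀ x : EuclideanSpace ℝ (Fin 2),
      (fderiv ℝ v x (EuclideanSpace.single 0 1) 0 -
          p * fderiv ℝ v x (EuclideanSpace.single 0 1) 2) +
        (fderiv ℝ v x (EuclideanSpace.single 1 1) 1 -
          q * fderiv ℝ v x (EuclideanSpace.single 1 1) 2) = 0) :
    (∫ x : EuclideanSpace ℝ (Fin 2), ∑ i : Fin 3,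
        ((u x 0 - p * u x 2) * fderiv ℝ u x (EuclideanSpace.single 0 1) i -
          (v x 0 - p * v x 2) * fderiv ℝ v x (EuclideanSpace.single 0 1) i +
          (u x 1 - q * u x 2) * fderiv ℝ u x (EuclideanSpace.single 1 1) i -
          (v x 1 - q * v x 2) * fderiv ℝ v x (EuclideanSpace.single 1 1) i) *
          (u x i - v x i)) =
      ∫ x : EuclideanSpace ℝ (Fin 2), ∑ i : Fin 3,
        (((u x 0 - v x 0) - p * (u x 2 - v x 2)) *
            fderiv ℝ u x (EuclideanSpace.single 0 1) i +
          ((u x 1 - v x 1) - q * (u x 2 - v x 2)) *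
            fderiv ℝ u x (EuclideanSpace.single 1 1) i) *
          (u x i - v x i) :=
  stmt_15_general p q u v hu hv hvsupp hdivv
end
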